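/- Suppose there is a sequence of positive numbers (c_N) with lim_{N→∞} c_N^{1/N} = 1 such that for every N and all origin-symmetric convex sets K, T ⊆ ℝ^N one has γ_N(K+T)·γ_N(K∩T) ≥ c_N·γ_N(K)·γ_N(T). Then for every d and all origin-symmetric convex sets K, T ⊆ ℝ^d, γ_d(K+T)·γ_d(K∩T) ≥ γ_d(K)·γ_d(T). -/
import Mathlib


open scoped Pointwise
open MeasureTheory ProbabilityTheory

/-- The standard Gaussian probability measure on `ℝ^N`. -/
noncomputable def stdGaussianPi (N : ℕ) : Measure (Fin N → ℝ) :=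
  Measure.pi fun _ => gaussianReal 0 1

section Aux

open Set

instance stdGaussianPi.instIsProbabilityMeasure (N : ℕ) :
    IsProbabilityMeasure (stdGaussianPi N) := by
  unfold stdGaussianPi; infer_instance

lemma block_lt {d m : ℕ} (j : Fin m) (i : Fin d) : (i : ℕ) + d * (j : ℕ) < d * m :=
  calc (i:ℕ) + d*(j:ℕ) < d * ((j:ℕ)+1) := by have := i.2; simp [Nat.mul_succ]; omega
  _ ≤ d * m := Nat.mul_le_mul_left d j.2

/-- The `j`-th block of `d` coordinates of a vector in `ℝ^{dm}`. -/
def blockMap (d m : ℕ) (j : Fin m) (x : Fin (d*m) → ℝ) (i : Fin d) : ℝ :=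
  x ⟨(i:ℕ) + d * (j:ℕ), block_lt j i⟩

/-- The `m`-fold "tensor power" of a set `S ⊆ ℝ^d`, as a subset of `ℝ^{dm}`. -/
def PowSet (d m : ℕ) (S : Set (Fin d → ℝ)) : Set (Fin (d*m) → ℝ) :=
  {x | ∀ j : Fin m, blockMap d m j x ∈ S}

lemma blockMap_add (d m : ℕ) (j : Fin m) (x y : Fin (d*m) → ℝ) :
    blockMap d m j (x + y) = blockMap d m j x + blockMap d m j y := rfl

lemma blockMap_smul (d m : ℕ) (j : Fin m) (a : ℝ) (x : Fin (d*m) → ℝ) :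
    blockMap d m j (a • x) = a • blockMap d m j x := rfl

lemma blockMap_neg (d m : ℕ) (j : Fin m) (x : Fin (d*m) → ℝ) :
    blockMap d m j (-x) = -(blockMap d m j x) := rfl

lemma powSet_measure (d m : ℕ) (S : Set (Fin d → ℝ)) :
    stdGaussianPi (d*m) (PowSet d m S) = stdGaussianPi d S ^ m := by
  induction m with
  | zero =>
    have h : PowSet d 0 S = Set.univ := by
      ext x; simp only [PowSet, mem_setOf_eq, mem_univ, iff_true]
      exact fun j => j.elim0
    rw [h, pow_zero, measure_univ]
  | succ m ih =>
    classical
    let e₁ : (∀ _ : Fin (d*m) ⊕ Fin d, ℝ) ≃ᵐ (Fin (d*m+d) → ℝ) :=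
      MeasurableEquiv.piCongrLeft (fun _ => ℝ) finSumFinEquiv
    let e₂ := MeasurableEquiv.sumPiEquivProdPi (fun _ : Fin (d*m) ⊕ Fin d => ℝ)
    let ψ := e₁.symm.trans e₂
    have mp : MeasurePreserving ψ (stdGaussianPi (d*m+d))
        ((stdGaussianPi (d*m)).prod (stdGaussianPi d)) := by
      have h1 := (MeasureTheory.measurePreserving_piCongrLeft
          (fun _ : Fin (d*m+d) => gaussianReal 0 1) finSumFinEquiv).symm e₁
      have h2 := MeasureTheory.measurePreserving_sumPiEquivProdPi
          (fun _ : Fin (d*m) ⊕ Fin d => gaussianReal 0 1)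
      exact h2.comp h1
    have hψ : ∀ x : Fin (d*m+d) → ℝ, ψ x =
        (fun a => x (finSumFinEquiv (Sum.inl a)), fun i => x (finSumFinEquiv (Sum.inr i))) :=
      fun x => rfl
    have hblock1 : ∀ (x : Fin (d*m+d) → ℝ) (j : Fin m),
        blockMap d m j (fun a => x (finSumFinEquiv (Sum.inl a)))
          = blockMap d (m+1) j.castSucc x := by
      intro x j; funext i
      show x (finSumFinEquiv (Sum.inl ⟨(i:ℕ) + d * (j:ℕ), _⟩)) = x _
      exact congrArg x (Fin.ext (by simp))
    have hblock2 : ∀ (x : Fin (d*m+d) → ℝ),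
        (fun i : Fin d => x (finSumFinEquiv (Sum.inr i)))
          = blockMap d (m+1) (Fin.last m) x := by
      intro x; funext i
      show x (finSumFinEquiv (Sum.inr i)) = x _
      exact congrArg x (Fin.ext (by simp; omega))
    have hset : PowSet d (m+1) S = ψ ⁻¹' ((PowSet d m S) ×ˢ S) := by
      ext x
      simp only [PowSet, mem_setOf_eq, mem_preimage, hψ, mem_prod]
      constructor
      · intro h
        exact ⟨fun j => (hblock1 x j) ▸ h j.castSucc, (hblock2 x) ▸ h (Fin.last m)⟩
      · rintro ⟨h1, h2⟩ j
        refine Fin.lastCases ?_ ?_ j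
        · rw [← hblock2 x]; exact h2
        · intro j'; rw [← hblock1 x j']; exact h1 j'
    have key : stdGaussianPi (d*(m+1)) (PowSet d (m+1) S)
        = ((stdGaussianPi (d*m)).prod (stdGaussianPi d)) ((PowSet d m S) ×ˢ S) := by
      show stdGaussianPi (d*m+d) (PowSet d (m+1) S) = _
      rw [hset, ← MeasurableEquiv.map_apply ψ, mp.map_eq]
    rw [key, Measure.prod_prod, ih, pow_succ]

lemma powSet_convex {d : ℕ} (m : ℕ) {S : Set (Fin d → ℝ)} (hS : Convex ℝ S) :
    Convex ℝ (PowSet d m S) := by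
  intro x hx y hy a b ha hb hab j
  have h := hS (hx j) (hy j) ha hb hab
  show blockMap d m j (a • x + b • y) ∈ S
  rw [blockMap_add, blockMap_smul, blockMap_smul]
  exact h

lemma powSet_symm {d : ℕ} (m : ℕ) {S : Set (Fin d → ℝ)} (hS : S = -S) :
    PowSet d m S = -(PowSet d m S) := by
  have hSneg : ∀ v : Fin d → ℝ, v ∈ S ↔ -v ∈ S := by
    intro v; constructor
    · intro hv; rw [hS] at hv; rwa [Set.mem_neg] at hv
    · intro hv; rw [hS]; rwa [Set.mem_neg]
  ext x
  simp only [Set.mem_neg, PowSet, mem_setOf_eq, blockMap_neg]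
  exact forall_congr' fun j => hSneg _

lemma powSet_inter {d : ℕ} (m : ℕ) (S T : Set (Fin d → ℝ)) :
    PowSet d m (S ∩ T) = PowSet d m S ∩ PowSet d m T := by
  ext x; simp only [PowSet, mem_setOf_eq, mem_inter_iff, forall_and]

def jOf {d m : ℕ} (hd : 0 < d) (p : Fin (d*m)) : Fin m :=
  ⟨(p:ℕ)/d, (Nat.div_lt_iff_lt_mul hd).2 (by simpa [mul_comm] using p.2)⟩

def iOf {d m : ℕ} (hd : 0 < d) (p : Fin (d*m)) : Fin d :=
  ⟨(p:ℕ) % d, Nat.mod_lt _ hd⟩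

lemma powSet_add {d : ℕ} (hd : 0 < d) (m : ℕ) (S T : Set (Fin d → ℝ)) :
    PowSet d m S + PowSet d m T = PowSet d m (S + T) := by
  have recompose : ∀ (F : Fin m → Fin d → ℝ) (j : Fin m),
      blockMap d m j (fun p => F (jOf hd p) (iOf hd p)) = F j := by
    intro F j; funext i
    have h1 : ((i:ℕ) + d * (j:ℕ)) / d = (j:ℕ) := by
      rw [Nat.add_mul_div_left _ _ hd, Nat.div_eq_of_lt i.2, zero_add]
    have h2 : ((i:ℕ) + d * (j:ℕ)) % d = (i:ℕ) := by
      rw [Nat.add_mul_mod_self_left, Nat.mod_eq_of_lt i.2]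
    show F (jOf hd _) (iOf hd _) = F j i
    have haux : ∀ (a : Fin m) (b : Fin d), a = j → b = i → F a b = F j i := by
      rintro _ _ rfl rfl; rfl
    exact haux _ _ (Fin.ext h1) (Fin.ext h2)
  apply Set.Subset.antisymm
  · rintro _ ⟨y, hy, z, hz, rfl⟩ j
    exact ⟨blockMap d m j y, hy j, blockMap d m j z, hz j, (blockMap_add d m j y z).symm⟩
  · intro x hx
    simp only [PowSet, mem_setOf_eq, Set.mem_add] at hx
    choose k hk t ht hsum using hx
    refine ⟨fun p => k (jOf hd p) (iOf hd p), fun j => by rw [recompose]; exact hk j,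
      fun p => t (jOf hd p) (iOf hd p), fun j => by rw [recompose]; exact ht j, ?_⟩
    funext p
    have hp : ((p:ℕ) % d) + d * ((p:ℕ)/d) = (p:ℕ) := Nat.mod_add_div _ _
    have h3 := congrFun (hsum (jOf hd p)) (iOf hd p)
    simp only [Pi.add_apply] at h3 ⊢
    rw [h3]
    exact congrArg x (Fin.ext hp)

/-- The limiting argument over real numbers. -/
lemma aux_limit (d : ℕ) (hd : 0 < d) (c : ℕ → ℝ) (hc : ∀ N, 0 < c N)
    (hlim : Filter.Tendsto (fun N : ℕ => c N ^ (1 / (N : ℝ))) Filter.atTop (nhds 1))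
    (x y : ℝ) (hx : 0 ≤ x) (hy : 0 ≤ y)
    (h : ∀ m : ℕ, c (d*m) * x ^ m ≤ y ^ m) : x ≤ y := by
  have hdm : Filter.Tendsto (fun m : ℕ => d * m) Filter.atTop Filter.atTop := by
    apply Filter.tendsto_atTop_atTop.2
    intro b
    exact ⟨b, fun m hm => le_trans hm (Nat.le_mul_of_pos_left m hd)⟩
  have h1 : Filter.Tendsto (fun m : ℕ => c (d*m) ^ (1 / ((d*m : ℕ) : ℝ)))
      Filter.atTop (nhds 1) := hlim.comp hdm
  have h2 : Filter.Tendsto (fun m : ℕ => c (d*m) ^ (1 / (m : ℝ)))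
      Filter.atTop (nhds 1) := by
    have h1d : Filter.Tendsto (fun m : ℕ => (c (d*m) ^ (1 / ((d*m : ℕ) : ℝ))) ^ d)
        Filter.atTop (nhds 1) := by
      simpa using h1.pow d
    apply h1d.congr
    intro m
    rcases Nat.eq_zero_or_pos m with rfl | hm
    · simp
    rw [← Real.rpow_natCast (c (d*m) ^ (1 / ((d*m : ℕ) : ℝ))) d, ← Real.rpow_mul (hc _).le]
    congr 1
    have : ((d*m : ℕ) : ℝ) = (d:ℝ) * (m:ℝ) := by push_cast; ring
    rw [this]
    field_simp
  have h3 : Filter.Tendsto (fun m : ℕ => y * (c (d*m) ^ (1 / (m : ℝ)))⁻¹)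
      Filter.atTop (nhds y) := by
    have := (h2.inv₀ one_ne_zero).const_mul y
    simpa using this
  apply ge_of_tendsto h3
  filter_upwards [Filter.eventually_ge_atTop 1] with m hm
  have hcm := hc (d*m)
  have hxm : x ^ m ≤ y ^ m / c (d*m) := by
    rw [le_div_iff₀ hcm]; linarith [h m]
  have hm0 : (m : ℝ) ≠ 0 := Nat.cast_ne_zero.2 (by omega)
  have step : (x ^ m : ℝ) ^ (1 / (m:ℝ)) ≤ (y ^ m / c (d*m)) ^ (1 / (m:ℝ)) :=
    Real.rpow_le_rpow (pow_nonneg hx m) hxm (by positivity)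
  have lhs_eq : (x ^ m : ℝ) ^ (1 / (m:ℝ)) = x := by
    rw [← Real.rpow_natCast x m, ← Real.rpow_mul hx]
    rw [mul_one_div, div_self hm0, Real.rpow_one]
  have rhs_eq : (y ^ m / c (d*m)) ^ (1 / (m:ℝ)) = y * (c (d*m) ^ (1 / (m : ℝ)))⁻¹ := by
    rw [Real.div_rpow (pow_nonneg hy m) hcm.le]
    rw [← Real.rpow_natCast y m, ← Real.rpow_mul hy, mul_one_div, div_self hm0, Real.rpow_one]
    rw [div_eq_mul_inv]
  rw [lhs_eq, rhs_eq] at step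
  exact step

end Aux

/-- If the strong Gaussian correlation inequality holds up to constants `c_N` with
`c_N^{1/N} → 1`, then it holds exactly in every dimension. -/
theorem stmt5 (c : ℕ → ℝ) (hc : ∀ N, 0 < c N)
    (hlim : Filter.Tendsto (fun N : ℕ => c N ^ (1 / (N : ℝ))) Filter.atTop (nhds 1))
    (H : ∀ (N : ℕ) (K T : Set (Fin N → ℝ)), Convex ℝ K → K = -K → Convex ℝ T → T = -T →
      ENNReal.ofReal (c N) * (stdGaussianPi N K * stdGaussianPi N T) ≤
        stdGaussianPi N (K + T) * stdGaussianPi N (K ∩ T)) :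
    ∀ (d : ℕ) (K T : Set (Fin d → ℝ)), Convex ℝ K → K = -K → Convex ℝ T → T = -T →
      stdGaussianPi d K * stdGaussianPi d T ≤
        stdGaussianPi d (K + T) * stdGaussianPi d (K ∩ T) := by
  intro d K T hK hKs hT hTs
  rcases Nat.eq_zero_or_pos d with rfl | hd
  · -- dimension 0 : the space is a single point
    rcases Set.eq_empty_or_nonempty K with hK0 | hK0
    · simp [hK0]
    rcases Set.eq_empty_or_nonempty T with hT0 | hT0
    · simp [hT0]
    have hKu : K = Set.univ := hK0.eq_univ
    have hTu : T = Set.univ := hT0.eq_univ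
    have hadd : (Set.univ : Set (Fin 0 → ℝ)) + Set.univ = Set.univ := by
      apply Set.eq_univ_of_forall
      intro x; exact ⟨x, trivial, 0, trivial, add_zero x⟩
    rw [hKu, hTu, hadd, Set.univ_inter]
  · -- main case : tensorization
    set a := stdGaussianPi d K with ha
    set b := stdGaussianPi d T with hb
    set A := stdGaussianPi d (K + T) with hA
    set B := stdGaussianPi d (K ∩ T) with hB
    have hENN : ∀ m : ℕ, ENNReal.ofReal (c (d*m)) * (a*b) ^ m ≤ (A*B) ^ m := by
      intro m
      have := H (d*m) (PowSet d m K) (PowSet d m T)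
        (powSet_convex m hK) (powSet_symm m hKs) (powSet_convex m hT) (powSet_symm m hTs)
      rw [powSet_measure, powSet_measure, powSet_add hd, ← powSet_inter,
        powSet_measure, powSet_measure] at this
      calc ENNReal.ofReal (c (d*m)) * (a*b) ^ m
          = ENNReal.ofReal (c (d*m)) * (a ^ m * b ^ m) := by rw [mul_pow]
        _ ≤ A ^ m * B ^ m := this
        _ = (A*B) ^ m := (mul_pow A B m).symm
    -- pass to real numbers
    have hane : a ≠ ⊤ := measure_ne_top _ _
    have hbne : b ≠ ⊤ := measure_ne_top _ _
    have hAne : A ≠ ⊤ := measure_ne_top _ _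
    have hBne : B ≠ ⊤ := measure_ne_top _ _
    have habne : a * b ≠ ⊤ := ENNReal.mul_ne_top hane hbne
    have hABne : A * B ≠ ⊤ := ENNReal.mul_ne_top hAne hBne
    have hreal : ∀ m : ℕ, c (d*m) * (a*b).toReal ^ m ≤ (A*B).toReal ^ m := by
      intro m
      have h := hENN m
      have hlne : ENNReal.ofReal (c (d*m)) * (a*b) ^ m ≠ ⊤ :=
        ENNReal.mul_ne_top ENNReal.ofReal_ne_top (ENNReal.pow_ne_top habne)
      have hrne : (A*B) ^ m ≠ ⊤ := ENNReal.pow_ne_top hABne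
      have := (ENNReal.toReal_le_toReal hlne hrne).2 h
      rwa [ENNReal.toReal_mul, ENNReal.toReal_ofReal (hc _).le, ENNReal.toReal_pow,
        ENNReal.toReal_pow] at this
    have hxy : (a*b).toReal ≤ (A*B).toReal :=
      aux_limit d hd c hc hlim _ _ ENNReal.toReal_nonneg ENNReal.toReal_nonneg hreal
    exact (ENNReal.toReal_le_toReal habne hABne).1 hxy
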